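/- Let λ ∈ (0,1) be irrational and let K_λ be the λ-gasket with irrational moving slider. Then K_λ does not satisfy the finite neighboring type property: the set of similitudes of the form h = F_w^{-1}∘F_u with w, u ∈ W_*, F_wK_λ ∩ F_uK_λ ≠ ∅, and similarity ratio c_u/c_w ∈ (c_*, 1/c_*) is infinite. In particular, writing λ = Σ_{i≥1} l_i 3^{-i} with digits l_i ∈ {0,1,2} and λ_k = Σ_{i≥1} l_{i+k} 3^{-i}, for every k ≥ 0 one has F_4F_3^kK_λ ∩ F_3F_{l_1}⋯F_{l_k}K_λ ≠ ∅, and the similitudes (F_3∘F_{l_1}∘⋯∘F_{l_k})^{-1}∘F_4∘F_3^k, k ≥ 0, are pairwise distinct translations. -/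

import Mathlib

open Set

noncomputable section

/-- The IFS of the `λ`-gasket with moving slider: `F_0(x) = x/3`,
`F_1(x) = x/3 + (1/3,0)`, `F_2(x) = x/3 + (2/3,0)`, `F_3(x) = x/3 + (1/3,√3/3)`,
`F_4(x) = x/3 + (1/6 + λ/3, √3/6)`. -/
def Kf (lam : ℝ) : Fin 5 → ℝ × ℝ → ℝ × ℝ := fun i x =>
  (1/3 : ℝ) • x +
    ![((0 : ℝ), (0 : ℝ)), (1/3, 0), (2/3, 0), (1/3, Real.sqrt 3 / 3),
      (1/6 + lam/3, Real.sqrt 3 / 6)] i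

/-- `F_{l_1} ∘ ⋯ ∘ F_{l_k}` (applying `F_{l_k}` first), where `l i` is the digit
`l_{i+1}`. -/
def Fcomp {α : Type*} {N : ℕ} (F : Fin N → α → α) (l : ℕ → Fin N) : ℕ → α → α
  | 0 => id
  | k + 1 => Fcomp F l k ∘ F (l k)

/-- `F_w = F_{w_1} ∘ ⋯ ∘ F_{w_m}` for a word `w = w_1⋯w_m`. -/
def Fword {α : Type*} {N : ℕ} (F : Fin N → α → α) : List (Fin N) → α → α
  | [] => id
  | i :: w => F i ∘ Fword F w

/-- `c_w`, the similarity ratio of `F_w` (here `c_w = 3^{-|w|}`). -/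
def cword {N : ℕ} (c : Fin N → ℝ) (w : List (Fin N)) : ℝ := (w.map c).prod

/-! Each `F_i` is the homothety `x ↦ x/3 + F_i 0`, so two words of equal length whose maps send
`p` and `q` to the same point differ exactly by the translation by `q - p`. Take for `p` the
fixed point `(1/2, √3/2)` of `F_3` and for `q_k` the point `(λ_k, 0)` with address
`l_{k+1} l_{k+2} ⋯`; both lie in `K_λ`, and
`F_4 F_3^k p = F_4 p = F_3 (λ, 0) = F_3 F_{l_1} ⋯ F_{l_k} q_k`. Since `λ_k = 3^k λ - n_k` with
`n_k ∈ ℤ` and `λ` is irrational, the points `q_k`, hence the translations, are pairwise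
distinct. -/

open Filter Topology

lemma Fword_append {α : Type*} {N : ℕ} (F : Fin N → α → α) (w u : List (Fin N)) :
    Fword F (w ++ u) = Fword F w ∘ Fword F u := by
  induction w with
  | nil => rfl
  | cons i w ih => simp [Fword, ih, Function.comp_assoc]

lemma Fword_replicate {α : Type*} {N : ℕ} (F : Fin N → α → α) (i : Fin N) (k : ℕ) :
    Fword F (List.replicate k i) = (F i)^[k] := by
  induction k with
  | zero => rfl
  | succ k ih => rw [List.replicate_succ, Fword, ih, Function.iterate_succ']

lemma Fword_map_range {α : Type*} {N : ℕ} (F : Fin N → α → α) (D : ℕ → Fin N) (k : ℕ) :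
    Fword F ((List.range k).map D) = Fcomp F D k := by
  induction k with
  | zero => rfl
  | succ k ih => rw [List.range_succ, List.map_append, Fword_append, ih]; rfl

lemma mapsTo_of_eq_iUnion_image {α ι : Type*} {F : ι → α → α} {K : Set α}
    (hK : K = ⋃ i, F i '' K) (i : ι) : MapsTo (F i) K K := by
  intro x hx
  rw [hK]
  exact mem_iUnion.2 ⟨i, x, hx, rfl⟩

lemma mapsTo_Fcomp {α : Type*} {N : ℕ} {F : Fin N → α → α} {K : Set α}
    (hF : ∀ i, MapsTo (F i) K K) (D : ℕ → Fin N) : ∀ n, MapsTo (Fcomp F D n) K K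
  | 0 => mapsTo_id K
  | n + 1 => (mapsTo_Fcomp hF D n).comp (hF (D n))

lemma cword_const {N : ℕ} (r : ℝ) (w : List (Fin N)) :
    cword (fun _ => r) w = r ^ w.length := by
  simp [cword, List.map_const', List.prod_replicate]

section Homothety

variable {E : Type*} [NormedAddCommGroup E] [NormedSpace ℝ E] {N : ℕ} {F : Fin N → E → E} {c : ℝ}

lemma Fword_apply_eq_smul_add (hF : ∀ i x, F i x = c • x + F i 0) (w : List (Fin N)) (x : E) :
    Fword F w x = c ^ w.length • x + Fword F w 0 := by
  induction w with
  | nil => simp [Fword]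
  | cons i w ih =>
    simp only [Fword, Function.comp_apply, List.length_cons]
    rw [hF i (Fword F w x), hF i (Fword F w 0), ih, smul_add, smul_smul, pow_succ']
    abel

lemma Fword_apply_eq_apply_add_sub (hF : ∀ i x, F i x = c • x + F i 0) {w u : List (Fin N)}
    (hwu : w.length = u.length) {p q : E} (h : Fword F w p = Fword F u q) (x : E) :
    Fword F w x = Fword F u (x + (q - p)) := by
  rw [Fword_apply_eq_smul_add hF, Fword_apply_eq_smul_add hF u] at h ⊢
  rw [hwu] at h ⊢
  rw [smul_add, smul_sub]
  linear_combination (norm := module) h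

lemma Fcomp_apply_eq (hF : ∀ i x, F i x = c • x + F i 0) (D : ℕ → Fin N) (n : ℕ) (x : E) :
    Fcomp F D n x = c ^ n • x + ∑ j ∈ Finset.range n, c ^ j • F (D j) 0 := by
  induction n generalizing x with
  | zero => simp [Fcomp]
  | succ n ih =>
    rw [Fcomp, Function.comp_apply, ih, hF, Finset.sum_range_succ, smul_add, smul_smul, ← pow_succ]
    abel

/-- `lim_n F_{D 0} ∘ ⋯ ∘ F_{D (n-1)} x`, the point of the attractor with address `D`. -/
def coding (F : Fin N → E → E) (c : ℝ) (D : ℕ → Fin N) : E :=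
  ∑' j, c ^ j • F (D j) 0

variable [CompleteSpace E]

lemma summable_pow_smul_apply_zero (hc : |c| < 1) (D : ℕ → Fin N) :
    Summable fun j => c ^ j • F (D j) 0 := by
  obtain ⟨C, hC⟩ : ∃ C, ∀ i, ‖F i 0‖ ≤ C :=
    ⟨∑ i, ‖F i 0‖, fun i =>
      Finset.single_le_sum (fun i _ => norm_nonneg (F i 0)) (Finset.mem_univ i)⟩
  refine Summable.of_norm_bounded ((summable_geometric_of_lt_one (abs_nonneg c) hc).mul_right C)
    fun j => ?_
  rw [norm_smul, Real.norm_eq_abs, abs_pow]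
  exact mul_le_mul_of_nonneg_left (hC _) (by positivity)

lemma tendsto_Fcomp_coding (hF : ∀ i x, F i x = c • x + F i 0) (hc : |c| < 1) (D : ℕ → Fin N)
    (x : E) : Tendsto (fun n => Fcomp F D n x) atTop (𝓝 (coding F c D)) := by
  simp only [Fcomp_apply_eq hF]
  have hx : Tendsto (fun n => c ^ n • x) atTop (𝓝 0) := by
    simpa using (tendsto_pow_atTop_nhds_zero_of_abs_lt_one hc).smul_const x
  simpa [coding] using hx.add (summable_pow_smul_apply_zero hc D).hasSum.tendsto_sum_nat

lemma coding_mem (hF : ∀ i x, F i x = c • x + F i 0) (hc : |c| < 1) {K : Set E}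
    (hK : IsClosed K) (hne : K.Nonempty) (hmaps : ∀ i, MapsTo (F i) K K) (D : ℕ → Fin N) :
    coding F c D ∈ K := by
  obtain ⟨x, hx⟩ := hne
  exact hK.mem_of_tendsto (tendsto_Fcomp_coding hF hc D x)
    (Eventually.of_forall fun n => mapsTo_Fcomp hmaps D n hx)

lemma coding_eq_Fcomp_shift (hF : ∀ i x, F i x = c • x + F i 0) (hc : |c| < 1)
    (D : ℕ → Fin N) (k : ℕ) : coding F c D = Fcomp F D k (coding F c fun j => D (j + k)) := by
  rw [Fcomp_apply_eq hF, coding, coding,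
    ← (summable_pow_smul_apply_zero hc D).sum_add_tsum_nat_add k,
    ← (summable_pow_smul_apply_zero hc _).tsum_const_smul, add_comm]
  simp only [smul_smul, ← pow_add, add_comm k]

lemma apply_coding_const (hF : ∀ i x, F i x = c • x + F i 0) (hc : |c| < 1) (i : Fin N) :
    F i (coding F c fun _ => i) = coding F c fun _ => i :=
  (coding_eq_Fcomp_shift hF hc (fun _ => i) 1).symm

end Homothety

lemma Irrational.injective_pow_mul_sub_intCast {x : ℝ} (hx : Irrational x) {b : ℕ} (hb : 2 ≤ b)
    (M : ℕ → ℤ) : Function.Injective fun k => (b : ℝ) ^ k * x - M k := by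
  intro m n h
  by_contra hmn
  have hne : (b : ℤ) ^ m - (b : ℤ) ^ n ≠ 0 :=
    sub_ne_zero.2 fun h' => hmn (Nat.pow_right_injective hb (by exact_mod_cast h'))
  apply (hx.intCast_mul hne).ne_int (M m - M n)
  push_cast
  linear_combination h

lemma abs_one_third_lt_one : |(1/3 : ℝ)| < 1 := by norm_num [abs_of_pos]

section Gasket

variable (lam : ℝ)

lemma Kf_apply (i : Fin 5) (x : ℝ × ℝ) : Kf lam i x = (1/3 : ℝ) • x + Kf lam i 0 := by
  simp [Kf]

lemma Kf_zero_of_le_two {i : Fin 5} (hi : (i : ℕ) ≤ 2) : Kf lam i 0 = (((i : ℕ) : ℝ) / 3, 0) := by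
  fin_cases i <;> simp_all [Kf]

lemma coding_Kf_const_three : coding (Kf lam) (1/3) (fun _ => 3) = (1/2, √3/2) := by
  rw [coding, (summable_geometric_of_lt_one (by norm_num) (by norm_num)).tsum_smul_const,
    tsum_geometric_of_lt_one (by norm_num) (by norm_num)]
  simp [Kf]
  norm_num

lemma coding_Kf_of_le_two {D : ℕ → Fin 5} (hD : ∀ j, (D j : ℕ) ≤ 2) :
    coding (Kf lam) (1/3) D = (∑' j, ((D j : ℕ) : ℝ) / 3 ^ (j + 1), 0) := by
  have hterm : ∀ j, (1/3 : ℝ) ^ j • Kf lam (D j) 0 = (((D j : ℕ) : ℝ) / 3 ^ (j + 1), 0) := by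
    intro j
    rw [Kf_zero_of_le_two lam (hD j)]
    ext
    · simp
      ring
    · simp
  have hs : HasSum (fun j => (((D j : ℕ) : ℝ) / 3 ^ (j + 1), (0 : ℝ)))
      (coding (Kf lam) (1/3) D) := by
    rw [← funext hterm]
    exact (summable_pow_smul_apply_zero abs_one_third_lt_one D).hasSum
  ext
  · exact (hs.map (AddMonoidHom.fst ℝ ℝ) continuous_fst).tsum_eq.symm
  · exact (hs.map (AddMonoidHom.snd ℝ ℝ) continuous_snd).unique hasSum_zero

lemma Kf_four_coding_const_three {dgt : ℕ → Fin 5} (hdgt : ∀ i, (dgt i : ℕ) ≤ 2)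
    (hlam : lam = ∑' i : ℕ, ((dgt i : ℕ) : ℝ) / 3 ^ (i + 1)) :
    Kf lam 4 (coding (Kf lam) (1/3) fun _ => 3) = Kf lam 3 (coding (Kf lam) (1/3) dgt) := by
  rw [coding_Kf_const_three, coding_Kf_of_le_two lam hdgt, ← hlam]
  ext <;> simp [Kf] <;> ring

lemma Fword_four_replicate_three_coding {dgt : ℕ → Fin 5} (hdgt : ∀ i, (dgt i : ℕ) ≤ 2)
    (hlam : lam = ∑' i : ℕ, ((dgt i : ℕ) : ℝ) / 3 ^ (i + 1)) (k : ℕ) :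
    Fword (Kf lam) (4 :: List.replicate k 3) (coding (Kf lam) (1/3) fun _ => 3) =
      Fword (Kf lam) (3 :: (List.range k).map dgt)
        (coding (Kf lam) (1/3) fun j => dgt (j + k)) := by
  simp only [Fword, Fword_replicate, Fword_map_range, Function.comp_apply]
  rw [Function.iterate_fixed (apply_coding_const (Kf_apply lam) abs_one_third_lt_one 3),
    ← coding_eq_Fcomp_shift (Kf_apply lam) abs_one_third_lt_one,
    Kf_four_coding_const_three lam hdgt hlam]

lemma exists_int_coding_shift_fst {D : ℕ → Fin 5} (hD : ∀ j, (D j : ℕ) ≤ 2) (k : ℕ) :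
    ∃ M : ℤ, (coding (Kf lam) (1/3) fun j => D (j + k)).1 =
      3 ^ k * (coding (Kf lam) (1/3) D).1 - M := by
  induction k with
  | zero => exact ⟨0, by simp⟩
  | succ k ih =>
    obtain ⟨M, hM⟩ := ih
    have hstep := congrArg Prod.fst
      (coding_eq_Fcomp_shift (Kf_apply lam) abs_one_third_lt_one (fun j => D (j + k)) 1)
    simp only [Fcomp, Function.comp_apply, id, zero_add, add_right_comm _ 1 k] at hstep
    rw [Kf_apply, Kf_zero_of_le_two lam (hD k)] at hstep
    refine ⟨3 * M + (D k : ℕ), ?_⟩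
    simp only [Prod.fst_add, Prod.smul_fst, smul_eq_mul] at hstep
    push_cast
    linear_combination 3 * hM - 3 * hstep

lemma injective_coding_shift {D : ℕ → Fin 5} (hD : ∀ j, (D j : ℕ) ≤ 2)
    (hirr : Irrational (coding (Kf lam) (1/3) D).1) :
    Function.Injective fun k => coding (Kf lam) (1/3) fun j => D (j + k) := by
  choose M hM using exists_int_coding_shift_fst lam hD
  intro a b hab
  apply hirr.injective_pow_mul_sub_intCast (b := 3) (by norm_num) M
  have h := congrArg Prod.fst hab
  simp only at h
  rw [hM, hM] at h
  exact_mod_cast h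

end Gasket

theorem stmt18_general (lam : ℝ) (hirr : Irrational lam)
    (dgt : ℕ → Fin 5) (hdgt : ∀ i, (dgt i : ℕ) ≤ 2)
    (hlam : lam = ∑' i : ℕ, ((dgt i : ℕ) : ℝ) / 3 ^ (i + 1))
    (K : Set (ℝ × ℝ)) (hKc : IsCompact K) (hKne : K.Nonempty)
    (hself : K = ⋃ i, Kf lam i '' K) :
    ({h : ℝ × ℝ → ℝ × ℝ | ∃ w u : List (Fin 5),
        Fword (Kf lam) w ∘ h = Fword (Kf lam) u ∧
        (Fword (Kf lam) w '' K ∩ Fword (Kf lam) u '' K).Nonempty ∧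
        (1/3 : ℝ) < cword (fun _ => (1/3 : ℝ)) u / cword (fun _ => (1/3 : ℝ)) w ∧
        cword (fun _ => (1/3 : ℝ)) u / cword (fun _ => (1/3 : ℝ)) w < 3}).Infinite ∧
    (∀ k : ℕ,
      ((Kf lam 4 '' ((Kf lam 3)^[k] '' K)) ∩
        (Kf lam 3 '' (Fcomp (Kf lam) dgt k '' K))).Nonempty) ∧
    (∃ t : ℕ → ℝ × ℝ, Function.Injective t ∧
      ∀ (k : ℕ) (x : ℝ × ℝ),
        Kf lam 4 ((Kf lam 3)^[k] x) = Kf lam 3 (Fcomp (Kf lam) dgt k (x + t k))) := by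
  have hmem : ∀ D, coding (Kf lam) (1/3) D ∈ K := coding_mem (Kf_apply lam) abs_one_third_lt_one
    hKc.isClosed hKne (mapsTo_of_eq_iUnion_image hself)
  set p := coding (Kf lam) (1/3) fun _ => 3
  set q : ℕ → ℝ × ℝ := fun k => coding (Kf lam) (1/3) fun j => dgt (j + k)
  set w : ℕ → List (Fin 5) := fun k => 4 :: List.replicate k 3
  set u : ℕ → List (Fin 5) := fun k => 3 :: (List.range k).map dgt
  have hmeet : ∀ k, Fword (Kf lam) (w k) p = Fword (Kf lam) (u k) (q k) :=
    Fword_four_replicate_three_coding lam hdgt hlam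
  have htrans : ∀ k x, Fword (Kf lam) (w k) x = Fword (Kf lam) (u k) (x + (q k - p)) :=
    fun k => Fword_apply_eq_apply_add_sub (Kf_apply lam) (by simp [w, u]) (hmeet k)
  have hinter : ∀ k, (Fword (Kf lam) (w k) '' K ∩ Fword (Kf lam) (u k) '' K).Nonempty :=
    fun k => ⟨Fword (Kf lam) (w k) p, mem_image_of_mem _ (hmem _),
      hmeet k ▸ mem_image_of_mem _ (hmem _)⟩
  have hirr' : Irrational (coding (Kf lam) (1/3) dgt).1 := by
    rwa [coding_Kf_of_le_two lam hdgt, ← hlam]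
  have hinj : Function.Injective fun k => q k - p :=
    sub_left_injective.comp (injective_coding_shift lam hdgt hirr')
  refine ⟨?_, fun k => ?_, fun k => q k - p, hinj, fun k x => ?_⟩
  · refine infinite_of_injective_forall_mem (f := fun k x => x + (q k - p))
      (fun a b hab => hinj (by simpa using congrFun hab 0)) fun k => ⟨u k, w k, ?_, ?_, ?_⟩
    · exact funext fun x => (htrans k x).symm
    · exact inter_comm (Fword (Kf lam) (w k) '' K) _ ▸ hinter k
    · norm_num [cword_const, u, w]
  · simpa only [w, u, Fword, Fword_replicate, Fword_map_range, image_comp] using hinter k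
  · simpa only [w, u, Fword, Fword_replicate, Fword_map_range, Function.comp_apply] using htrans k x

/-- **Appendix, Example 2.** Let `λ ∈ (0,1)` be irrational with ternary digits
`l_i ∈ {0,1,2}` (here `dgt i = l_{i+1}`), and let `K_λ` be the `λ`-gasket with
irrational moving slider. Then `K_λ` does not satisfy the finite neighboring type
property: the set of similitudes `h = F_w^{-1}∘F_u` (i.e. `F_w ∘ h = F_u`) with
`F_wK_λ ∩ F_uK_λ ≠ ∅` and ratio `c_u/c_w ∈ (c_*, 1/c_*) = (1/3, 3)` is infinite.
In particular, `F_4F_3^kK_λ ∩ F_3F_{l_1}⋯F_{l_k}K_λ ≠ ∅` for every `k ≥ 0`, and the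
similitudes `(F_3∘F_{l_1}∘⋯∘F_{l_k})^{-1}∘F_4∘F_3^k`, `k ≥ 0`, are pairwise distinct
translations. -/
theorem stmt18 (lam : ℝ) (h0 : 0 < lam) (h1 : lam < 1) (hirr : Irrational lam)
    (dgt : ℕ → Fin 5) (hdgt : ∀ i, (dgt i : ℕ) ≤ 2)
    (hlam : lam = ∑' i : ℕ, ((dgt i : ℕ) : ℝ) / 3 ^ (i + 1))
    (K : Set (ℝ × ℝ)) (hKc : IsCompact K) (hKne : K.Nonempty)
    (hself : K = ⋃ i, Kf lam i '' K) :
    ({h : ℝ × ℝ → ℝ × ℝ | ∃ w u : List (Fin 5),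
        Fword (Kf lam) w ∘ h = Fword (Kf lam) u ∧
        (Fword (Kf lam) w '' K ∩ Fword (Kf lam) u '' K).Nonempty ∧
        (1/3 : ℝ) < cword (fun _ => (1/3 : ℝ)) u / cword (fun _ => (1/3 : ℝ)) w ∧
        cword (fun _ => (1/3 : ℝ)) u / cword (fun _ => (1/3 : ℝ)) w < 3}).Infinite ∧
    (∀ k : ℕ,
      ((Kf lam 4 '' ((Kf lam 3)^[k] '' K)) ∩
        (Kf lam 3 '' (Fcomp (Kf lam) dgt k '' K))).Nonempty) ∧
    (∃ t : ℕ → ℝ × ℝ, Function.Injective t ∧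
      ∀ (k : ℕ) (x : ℝ × ℝ),
        Kf lam 4 ((Kf lam 3)^[k] x) = Kf lam 3 (Fcomp (Kf lam) dgt k (x + t k))) :=
  stmt18_general lam hirr dgt hdgt hlam K hKc hKne hself
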